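/- Let n ≥ 2, l a positive integer, r a prime with gcd(l, r) = 1, and m ≥ 0 an integer. Then π_n(r^{m+1} l) = Σ_{d | l} μ(d) (n^{r^{m+1} l / d} − n^{r^m l / d}), where π_n(k) is the number of primitive words of length k over an alphabet of size n and μ is the Möbius function. -/

import Mathlib

variable {A : Type*}

/-- k-fold concatenation of a word with itself. -/
def pw (w : List A) : ℕ → List A
  | 0 => []
  | n + 1 => w ++ pw w n

/-- A nonempty word is primitive if it is not a proper power. -/
def Primitive (w : List A) : Prop :=
  w ≠ [] ∧ ∀ (v : List A) (m : ℕ), w = pw v m → m = 1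

/-- Number of primitive words of length k over an n-letter alphabet. -/
noncomputable def piw (n k : ℕ) : ℕ :=
  Nat.card {w : List (Fin n) // w.length = k ∧ Primitive w}

/-!
Every nonempty word `w` is, in exactly one way, a power of a primitive word: its root, of length
the least `d > 0` with `w.rotate d = w`. Since that minimal period divides every other period of
`w`, the root cannot itself be a proper power. Counting words of length `k` by their roots
gives `∑_{d ∣ k} π_n(d) = n^k`, so Möbius inversion gives `π_n(k) = ∑_{e ∣ k} μ(e) n^(k/e)`.
When `k = r^(m+1) l` with `r ∤ l`, the only divisors `e` with `μ(e) ≠ 0` are `d` and `r d`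
with `d ∣ l`, and `μ(r d) = -μ(d)`.
-/

lemma length_pw (w : List A) (k : ℕ) : (pw w k).length = k * w.length := by
  induction k with
  | zero => simp [pw]
  | succ k ih => simp only [pw, List.length_append, ih]; ring

lemma pw_add (w : List A) (a b : ℕ) : pw w (a + b) = pw w a ++ pw w b := by
  induction a with
  | zero => simp [pw]
  | succ a ih => rw [Nat.add_right_comm, pw, pw, ih, List.append_assoc]

lemma pw_mul (w : List A) (a b : ℕ) : pw w (a * b) = pw (pw w a) b := by
  induction b with
  | zero => rfl
  | succ b ih => rw [Nat.mul_succ, add_comm, pw_add, ih]; rfl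

lemma pw_succ (w : List A) (k : ℕ) : pw w (k + 1) = pw w k ++ w := by
  rw [pw_add]; simp [pw]

lemma take_pw (w : List A) {a b : ℕ} (h : b ≤ a) : (pw w a).take (b * w.length) = pw w b := by
  obtain ⟨c, rfl⟩ := Nat.exists_eq_add_of_le h
  rw [pw_add, List.take_left' (length_pw w b)]

lemma take_length_pw (w : List A) {e : ℕ} (he : e ≠ 0) : (pw w e).take w.length = w := by
  simpa [pw] using take_pw w (Nat.one_le_iff_ne_zero.mpr he)

lemma rotate_pw_length (w : List A) (e : ℕ) : (pw w e).rotate w.length = pw w e := by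
  cases e with
  | zero => rfl
  | succ e => rw [pw, List.rotate_append_length_eq, ← pw_succ, pw]

lemma eq_pw_of_append_comm {u x : List A} (h : u ++ x = x ++ u) {j : ℕ}
    (hx : x.length = j * u.length) : x = pw u j := by
  induction j generalizing x with
  | zero => simpa [pw] using hx
  | succ j ih =>
    have hux : u.length ≤ x.length := by rw [hx]; exact Nat.le_mul_of_pos_left _ j.succ_pos
    have hprefix : x.take u.length = u := by
      simpa [List.take_append_of_le_length hux] using (congrArg (List.take u.length) h).symm
    rw [← List.take_append_drop u.length x, hprefix] at h hx ⊢
    have hcomm : u ++ x.drop u.length = x.drop u.length ++ u := by simpa using h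
    have hlen : (x.drop u.length).length = j * u.length := by
      rw [List.length_append, Nat.succ_mul] at hx; omega
    rw [pw, ih hcomm hlen]

lemma eq_pw_take_of_rotate_eq {w : List A} {d : ℕ} (hd : 0 < d) (hdvd : d ∣ w.length)
    (h : w.rotate d = w) : w = pw (w.take d) (w.length / d) := by
  obtain ⟨j, hj⟩ := hdvd
  cases j with
  | zero => simp_all [pw]
  | succ j =>
    have hdw : d ≤ w.length := by rw [hj]; exact Nat.le_mul_of_pos_right d j.succ_pos
    have hcomm : w.take d ++ w.drop d = w.drop d ++ w.take d := by
      rw [List.take_append_drop, ← List.rotate_eq_drop_append_take hdw, h]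
    have hdrop : w.drop d = pw (w.take d) j :=
      eq_pw_of_append_comm hcomm (by
        rw [List.length_drop, List.length_take_of_le hdw, hj, Nat.mul_succ, Nat.add_sub_cancel,
          mul_comm])
    conv_lhs => rw [← List.take_append_drop d w, hdrop]
    rw [hj, Nat.mul_div_cancel_left _ hd, pw]

lemma iterate_rotate_one (w : List A) (d : ℕ) : (·.rotate 1)^[d] w = w.rotate d := by
  induction d with
  | zero => simp
  | succ d ih => rw [Function.iterate_succ_apply', ih, List.rotate_rotate]

lemma isPeriodicPt_rotate_one_iff {w : List A} {d : ℕ} :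
    Function.IsPeriodicPt (·.rotate 1) d w ↔ w.rotate d = w := by
  rw [Function.IsPeriodicPt, Function.IsFixedPt, iterate_rotate_one]

noncomputable def rotationPeriod (w : List A) : ℕ := Function.minimalPeriod (·.rotate 1) w

noncomputable def primitiveRoot (w : List A) : List A := w.take (rotationPeriod w)

lemma rotationPeriod_dvd_of_rotate_eq {w : List A} {d : ℕ} (h : w.rotate d = w) :
    rotationPeriod w ∣ d :=
  (isPeriodicPt_rotate_one_iff.mpr h).minimalPeriod_dvd

lemma rotationPeriod_dvd_length (w : List A) : rotationPeriod w ∣ w.length :=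
  rotationPeriod_dvd_of_rotate_eq w.rotate_length

lemma rotationPeriod_pos {w : List A} (hw : w ≠ []) : 0 < rotationPeriod w :=
  (isPeriodicPt_rotate_one_iff.mpr w.rotate_length).minimalPeriod_pos
    (List.length_pos_iff.mpr hw)

lemma length_primitiveRoot {w : List A} (hw : w ≠ []) :
    (primitiveRoot w).length = rotationPeriod w := by
  simpa [primitiveRoot] using
    Nat.le_of_dvd (List.length_pos_iff.mpr hw) (rotationPeriod_dvd_length w)

lemma eq_pw_primitiveRoot {w : List A} (hw : w ≠ []) :
    w = pw (primitiveRoot w) (w.length / rotationPeriod w) :=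
  eq_pw_take_of_rotate_eq (rotationPeriod_pos hw) (rotationPeriod_dvd_length w)
    (isPeriodicPt_rotate_one_iff.mp (Function.isPeriodicPt_minimalPeriod _ w))

lemma primitive_primitiveRoot {w : List A} (hw : w ≠ []) : Primitive (primitiveRoot w) := by
  have hroot : primitiveRoot w ≠ [] := by
    rw [← List.length_pos_iff, length_primitiveRoot hw]; exact rotationPeriod_pos hw
  refine ⟨hroot, fun v m hv => ?_⟩
  have hlen : rotationPeriod w = m * v.length := by rw [← length_primitiveRoot hw, hv, length_pw]
  have hpos : 0 < m * v.length := hlen ▸ rotationPeriod_pos hw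
  have hper : m * v.length ∣ v.length := hlen ▸ rotationPeriod_dvd_of_rotate_eq
    (by rw [eq_pw_primitiveRoot hw, hv, ← pw_mul, rotate_pw_length])
  have := Nat.le_of_dvd (Nat.pos_of_mul_pos_left hpos) hper
  nlinarith

lemma rotationPeriod_pw {v : List A} (hv : Primitive v) {e : ℕ} (he : e ≠ 0) :
    rotationPeriod (pw v e) = v.length := by
  have hvw : v.length ≤ (pw v e).length := by
    rw [length_pw]; exact Nat.le_mul_of_pos_left _ (Nat.pos_of_ne_zero he)
  have hw : pw v e ≠ [] := by
    rw [← List.length_pos_iff]; exact (List.length_pos_iff.mpr hv.1).trans_le hvw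
  have hdvd : rotationPeriod (pw v e) ∣ v.length :=
    rotationPeriod_dvd_of_rotate_eq (rotate_pw_length v e)
  have hpow : v = pw (primitiveRoot (pw v e)) (v.length / rotationPeriod (pw v e)) := by
    have := take_pw (primitiveRoot (pw v e))
      (Nat.div_le_div_right (c := rotationPeriod (pw v e)) hvw)
    rwa [length_primitiveRoot hw, Nat.div_mul_cancel hdvd, ← eq_pw_primitiveRoot hw,
      take_length_pw v he] at this
  rw [← Nat.div_mul_cancel hdvd, hv.2 _ _ hpow, one_mul]

lemma primitiveRoot_pw {v : List A} (hv : Primitive v) {e : ℕ} (he : e ≠ 0) :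
    primitiveRoot (pw v e) = v := by
  rw [primitiveRoot, rotationPeriod_pw hv he, take_length_pw v he]

noncomputable def primitiveRootEquiv {k : ℕ} (hk : k ≠ 0) :
    {w : List A // w.length = k} ≃
      Σ d : k.divisors, {v : List A // v.length = d ∧ Primitive v} where
  toFun w :=
    have hw : w.1 ≠ [] := by rw [← List.length_pos_iff, w.2]; exact Nat.pos_of_ne_zero hk
    ⟨⟨rotationPeriod w.1,
        Nat.mem_divisors.mpr ⟨(rotationPeriod_dvd_length _).trans (dvd_of_eq w.2), hk⟩⟩,
      primitiveRoot w.1, length_primitiveRoot hw, primitive_primitiveRoot hw⟩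
  invFun x := ⟨pw x.2.1 (k / x.1), by
    rw [length_pw, x.2.2.1, Nat.div_mul_cancel (Nat.dvd_of_mem_divisors x.1.2)]⟩
  left_inv w := by
    obtain ⟨w, rfl⟩ := w
    have hw : w ≠ [] := by rw [← List.length_pos_iff]; exact Nat.pos_of_ne_zero hk
    exact Subtype.ext (eq_pw_primitiveRoot hw).symm
  right_inv x := by
    obtain ⟨⟨d, hd⟩, v, hvd : v.length = d, hv⟩ := x
    subst hvd
    have he : k / v.length ≠ 0 :=
      (Nat.div_pos (Nat.divisor_le hd) (Nat.pos_of_mem_divisors hd)).ne'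
    exact Sigma.subtype_ext (Subtype.ext (rotationPeriod_pw hv he)) (primitiveRoot_pw hv he)

lemma sum_piw (n : ℕ) {k : ℕ} (hk : k ≠ 0) : ∑ d ∈ k.divisors, piw n d = n ^ k := by
  have hfin (d : ℕ) : Finite {v : List (Fin n) // v.length = d ∧ Primitive v} :=
    Finite.of_injective (β := List.Vector (Fin n) d) (fun v => ⟨v.1, v.2.1⟩)
      fun _ _ h => Subtype.ext (congrArg Subtype.val h :)
  have hcard := Nat.card_congr (primitiveRootEquiv (A := Fin n) hk)
  rw [Nat.card_sigma] at hcard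
  rw [← Finset.sum_coe_sort k.divisors (fun d => piw n d)]
  unfold piw
  rw [← hcard]
  change Nat.card (List.Vector (Fin n) k) = n ^ k
  rw [Nat.card_eq_fintype_card, card_vector, Fintype.card_fin]

lemma piw_zero (n : ℕ) : piw n 0 = 0 := by
  rw [piw, Nat.card_eq_zero]
  exact Or.inl ⟨fun w => w.2.2.1 (List.eq_nil_of_length_eq_zero w.2.1)⟩

open ArithmeticFunction in
lemma piw_eq_sum_moebius (n k : ℕ) :
    (piw n k : ℤ) = ∑ e ∈ k.divisors, (moebius e : ℤ) * (n : ℤ) ^ (k / e) := by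
  rcases Nat.eq_zero_or_pos k with rfl | hk
  · simp [piw_zero]
  have hinv := (sum_eq_iff_sum_mul_moebius_eq (f := fun d => (piw n d : ℤ))
    (g := fun d => (n : ℤ) ^ d)).mp (fun d hd => by exact_mod_cast sum_piw n hd.ne') k hk
  simp only [Int.cast_id] at hinv
  rw [← hinv, Nat.sum_divisorsAntidiagonal fun a b => (moebius a : ℤ) * (n : ℤ) ^ b]

lemma sum_divisors_mul_of_coprime {M : Type*} [AddCommMonoid M] {a b : ℕ} (hab : a.Coprime b)
    (f : ℕ → M) :
    ∑ e ∈ (a * b).divisors, f e = ∑ x ∈ a.divisors, ∑ y ∈ b.divisors, f (x * y) := by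
  rw [hab.divisors_mul, Finset.sum_map]
  exact (Finset.sum_attach _ fun p => f (p.1 * p.2)).trans (Finset.sum_product ..)

open ArithmeticFunction in
lemma sum_divisors_prime_pow_mul_moebius {r l : ℕ} (hr : r.Prime) (hrl : r.Coprime l) (k : ℕ)
    (F : ℕ → ℤ) :
    ∑ e ∈ (r ^ (k + 1) * l).divisors, moebius e * F e =
      ∑ d ∈ l.divisors, moebius d * (F d - F (r * d)) := by
  have hmul (i : ℕ) {d : ℕ} (hd : d ∈ l.divisors) :
      moebius (r ^ i * d) = moebius (r ^ i) * moebius d :=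
    isMultiplicative_moebius.map_mul_of_coprime
      ((hrl.pow_left i).coprime_dvd_right (Nat.dvd_of_mem_divisors hd))
  rw [sum_divisors_mul_of_coprime (hrl.pow_left _), Nat.sum_divisors_prime_pow hr,
    Finset.sum_range_succ', Finset.sum_range_succ', Finset.sum_eq_zero, zero_add,
    ← Finset.sum_add_distrib]
  · refine Finset.sum_congr rfl fun d hd => ?_
    rw [hmul 1 hd, hmul 0 hd, pow_one, pow_zero, one_mul, moebius_apply_prime hr,
      moebius_apply_one]
    ring
  · intro i _
    refine Finset.sum_eq_zero fun d hd => ?_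
    rw [hmul _ hd, moebius_apply_prime_pow hr (by omega)]
    simp

open ArithmeticFunction in
theorem piw_moebius_formula_general (n l r m : ℕ) (hr : r.Prime)
    (hgcd : Nat.gcd l r = 1) :
    (piw n (r ^ (m + 1) * l) : ℤ) =
      ∑ d ∈ l.divisors, (moebius d : ℤ) *
        ((n : ℤ) ^ (r ^ (m + 1) * l / d) - (n : ℤ) ^ (r ^ m * l / d)) := by
  rw [piw_eq_sum_moebius, sum_divisors_prime_pow_mul_moebius hr (Nat.Coprime.symm hgcd)]
  refine Finset.sum_congr rfl fun d _ => ?_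
  rw [pow_succ', mul_assoc, Nat.mul_div_mul_left _ _ hr.pos]

open ArithmeticFunction in
theorem piw_moebius_formula (n l r m : ℕ) (hn : 2 ≤ n) (hl : 0 < l) (hr : r.Prime)
    (hgcd : Nat.gcd l r = 1) :
    (piw n (r ^ (m + 1) * l) : ℤ) =
      ∑ d ∈ l.divisors, (moebius d : ℤ) *
        ((n : ℤ) ^ (r ^ (m + 1) * l / d) - (n : ℤ) ^ (r ^ m * l / d)) :=
  piw_moebius_formula_general n l r m hr hgcd
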